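/- arXiv:1102.0301 — 4 statements merged into one kernel-verified Lean document; each statement's English description precedes it below -/
import Mathlib

section
/- Let $1 < \eta < 2$ and $\theta > 0$, and let $Y$ be a real-valued random variable with $E[|Y|^{\eta}] < \infty$. Then $E[(e^{\theta Y} - 1 - \theta Y)\mathbf{1}(Y \le 1/\theta)] \le \theta^{\eta} E[|Y|^{\eta}] \left( \frac{1}{2-\eta} + \frac{1}{\eta - 1} + e \right)$. -/
/-! For `t ≤ 1` one has `e^t - 1 - t ≤ |t|^η` whenever `1 ≤ η ≤ 2`: on `[-1, 1]` the left side is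
at most `t² ≤ |t|^η`, and for `t < -1` it is at most `-t = |t| ≤ |t|^η`. Applied to `t = θY` on
`{Y ≤ 1/θ}` and integrated, this gives the bound with constant `1`, which is at most
`1/(2-η) + 1/(η-1) + e`. -/

open MeasureTheory

namespace Real

theorem exp_sub_one_sub_le_abs_rpow {η t : ℝ} (hη1 : 1 ≤ η) (hη2 : η ≤ 2) (ht : t ≤ 1) :
    exp t - 1 - t ≤ |t| ^ η := by
  rcases le_or_gt (-1) t with h | h
  · have habs : |t| ≤ 1 := abs_le.2 ⟨h, ht⟩
    calc exp t - 1 - t ≤ |exp t - 1 - t| := le_abs_self _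
      _ ≤ t ^ 2 := abs_exp_sub_one_sub_id_le habs
      _ = |t| ^ (2 : ℝ) := by rw [rpow_two, sq_abs]
      _ ≤ |t| ^ η := rpow_le_rpow_of_exponent_ge' (abs_nonneg t) habs (by linarith) hη2
  · have habs : 1 ≤ |t| := by rw [abs_of_neg (by linarith)]; linarith
    calc exp t - 1 - t ≤ -t := by linarith [exp_le_one_iff.2 (by linarith : t ≤ 0)]
      _ = |t| ^ (1 : ℝ) := by rw [rpow_one, abs_of_neg (by linarith)]
      _ ≤ |t| ^ η := rpow_le_rpow_of_exponent_le habs hη1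

theorem truncated_exp_sub_one_sub_le {η θ y : ℝ} (hη1 : 1 ≤ η) (hη2 : η ≤ 2) (hθ : 0 < θ) :
    (if y ≤ 1 / θ then exp (θ * y) - 1 - θ * y else 0) ≤ θ ^ η * |y| ^ η := by
  split_ifs with hy
  · have hθy : θ * y ≤ 1 := by rwa [le_div_iff₀' hθ] at hy
    calc exp (θ * y) - 1 - θ * y ≤ |θ * y| ^ η := exp_sub_one_sub_le_abs_rpow hη1 hη2 hθy
      _ = θ ^ η * |y| ^ η := by rw [abs_mul, abs_of_pos hθ, mul_rpow hθ.le (abs_nonneg y)]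
  · positivity

theorem truncated_exp_sub_one_sub_nonneg (θ y : ℝ) :
    0 ≤ if y ≤ 1 / θ then exp (θ * y) - 1 - θ * y else 0 := by
  split_ifs
  · linarith [add_one_le_exp (θ * y)]
  · exact le_rfl

end Real

open Real

theorem integral_truncated_exp_sub_one_sub_le {Ω : Type*} [MeasurableSpace Ω] (P : Measure Ω)
    (Y : Ω → ℝ) {η θ : ℝ} (hη1 : 1 ≤ η) (hη2 : η ≤ 2)
    (hmom : Integrable (fun ω => |Y ω| ^ η) P) (hθ : 0 < θ) :
    ∫ ω, (if Y ω ≤ 1 / θ then exp (θ * Y ω) - 1 - θ * Y ω else 0) ∂P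
      ≤ θ ^ η * ∫ ω, |Y ω| ^ η ∂P := by
  rw [← integral_const_mul]
  exact integral_mono_of_nonneg
    (Filter.Eventually.of_forall fun ω => truncated_exp_sub_one_sub_nonneg θ (Y ω))
    (hmom.const_mul _) (Filter.Eventually.of_forall fun ω => truncated_exp_sub_one_sub_le hη1 hη2 hθ)

theorem stmt3_general {Ω : Type*} [MeasurableSpace Ω] (P : Measure Ω)
    (Y : Ω → ℝ) (η : ℝ) (hη1 : 1 < η) (hη2 : η < 2)
    (hmom : Integrable (fun ω => |Y ω| ^ η) P) (θ : ℝ) (hθ : 0 < θ) :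
    ∫ ω, (if Y ω ≤ 1 / θ then Real.exp (θ * Y ω) - 1 - θ * Y ω else 0) ∂P
      ≤ θ ^ η * (∫ ω, |Y ω| ^ η ∂P) * (1 / (2 - η) + 1 / (η - 1) + Real.exp 1) := by
  have hconst : 1 ≤ 1 / (2 - η) + 1 / (η - 1) + exp 1 := by
    have h2 : 0 < 1 / (2 - η) := by apply one_div_pos.2; linarith
    have h1 : 0 < 1 / (η - 1) := by apply one_div_pos.2; linarith
    linarith [one_le_exp zero_le_one]
  have hrhs : 0 ≤ θ ^ η * ∫ ω, |Y ω| ^ η ∂P :=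
    mul_nonneg (rpow_nonneg hθ.le η) (integral_nonneg fun ω => rpow_nonneg (abs_nonneg _) η)
  calc _ ≤ θ ^ η * ∫ ω, |Y ω| ^ η ∂P :=
        integral_truncated_exp_sub_one_sub_le P Y hη1.le hη2.le hmom hθ
    _ ≤ _ := le_mul_of_one_le_right hrhs hconst

/-- Truncated exponential moment bound, case `1 < η < 2`:
`E[(e^{θY} - 1 - θY) 1(Y ≤ 1/θ)] ≤ θ^η E[|Y|^η] (1/(2-η) + 1/(η-1) + e)`. -/
theorem stmt3 {Ω : Type*} [MeasurableSpace Ω] (P : Measure Ω) [IsProbabilityMeasure P]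
    (Y : Ω → ℝ) (hY : Measurable Y) (η : ℝ) (hη1 : 1 < η) (hη2 : η < 2)
    (hmom : Integrable (fun ω => |Y ω| ^ η) P) (θ : ℝ) (hθ : 0 < θ) :
    ∫ ω, (if Y ω ≤ 1 / θ then Real.exp (θ * Y ω) - 1 - θ * Y ω else 0) ∂P
      ≤ θ ^ η * (∫ ω, |Y ω| ^ η ∂P) * (1 / (2 - η) + 1 / (η - 1) + Real.exp 1) :=
  stmt3_general P Y η hη1 hη2 hmom θ hθ
end

section
/- Let $\eta > 0$, $\theta > 0$, and $v > 0$ with $\theta v \ge 1$. Then $\theta \int_{1/\theta}^{v} e^{\theta t} t^{-\eta}\, dt \leq \theta^{\eta} e^{\theta v/2} + 2^{\eta} e^{\theta v} v^{-\eta}$. -/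
/-!
On `[a, b]` with `a > 0` the weight `t ^ (-η)` is at most `a ^ (-η)`, and `θ ∫ₐᵇ e^{θt} dt ≤ e^{θb}`,
so `θ ∫ₐᵇ e^{θt} t^{-η} dt ≤ a^{-η} e^{θb}`. Applied to `[1/θ, v/2]` and `[v/2, v]` this gives the
two terms of the bound; if `v/2 < 1/θ`, applying it to the whole of `[1/θ, v]` already gives the
second term.
-/

open Real intervalIntegral MeasureTheory

section

variable {θ η a b : ℝ}

variable (θ η) in
theorem intervalIntegrable_exp_mul_mul_rpow (ha : 0 < a) (hb : 0 < b) :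
    IntervalIntegrable (fun t => exp (θ * t) * t ^ η) volume a b := by
  refine ContinuousOn.intervalIntegrable fun t ht => ?_
  have ht : t ≠ 0 := (lt_min ha hb).trans_le ht.1 |>.ne'
  fun_prop (disch := exact Or.inl ht)

theorem mul_integral_exp_mul (hθ : θ ≠ 0) :
    θ * ∫ t in a..b, exp (θ * t) = exp (θ * b) - exp (θ * a) := by
  rw [integral_comp_mul_left (fun x => exp x) hθ, integral_exp, smul_eq_mul,
    mul_inv_cancel_left₀ hθ]

theorem mul_integral_exp_mul_mul_rpow_neg_le (hη : 0 ≤ η) (hθ : 0 < θ) (ha : 0 < a)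
    (hab : a ≤ b) :
    θ * ∫ t in a..b, exp (θ * t) * t ^ (-η) ≤ a ^ (-η) * exp (θ * b) := by
  have hmono : ∫ t in a..b, exp (θ * t) * t ^ (-η) ≤ ∫ t in a..b, a ^ (-η) * exp (θ * t) := by
    refine integral_mono_on hab (intervalIntegrable_exp_mul_mul_rpow θ _ ha (ha.trans_le hab))
      ((continuous_const.mul (by fun_prop)).intervalIntegrable a b) fun t ht => ?_
    rw [mul_comm]
    refine mul_le_mul_of_nonneg_right ?_ (exp_pos _).le
    exact rpow_le_rpow_of_nonpos ha ht.1 (neg_nonpos.mpr hη)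
  calc θ * ∫ t in a..b, exp (θ * t) * t ^ (-η)
      ≤ θ * ∫ t in a..b, a ^ (-η) * exp (θ * t) := by gcongr
    _ = a ^ (-η) * (exp (θ * b) - exp (θ * a)) := by
      rw [intervalIntegral.integral_const_mul, mul_left_comm, mul_integral_exp_mul hθ.ne']
    _ ≤ a ^ (-η) * exp (θ * b) := by
      have := rpow_nonneg ha.le (-η)
      nlinarith [exp_pos (θ * a)]

end

/-- Deterministic integral inequality: for `η, θ, v > 0` with `θ v ≥ 1`,
`θ ∫_{1/θ}^{v} e^{θt} t^{-η} dt ≤ θ^η e^{θv/2} + 2^η e^{θv} v^{-η}`. -/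
theorem stmt4 (η θ v : ℝ) (hη : 0 < η) (hθ : 0 < θ) (hv : 0 < v) (hθv : 1 ≤ θ * v) :
    θ * ∫ t in (1 / θ)..v, Real.exp (θ * t) * t ^ (-η)
      ≤ θ ^ η * Real.exp (θ * v / 2) + (2 : ℝ) ^ η * Real.exp (θ * v) * v ^ (-η) := by
  have hθinv : 0 < 1 / θ := by positivity
  have hθη : (1 / θ) ^ (-η) = θ ^ η := by
    rw [one_div, inv_rpow hθ.le, ← rpow_neg hθ.le, neg_neg]
  have hvη : (v / 2) ^ (-η) * exp (θ * v) = 2 ^ η * exp (θ * v) * v ^ (-η) := by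
    rw [div_rpow hv.le zero_le_two, rpow_neg zero_le_two, div_inv_eq_mul]
    ring
  rcases le_or_gt (1 / θ) (v / 2) with hsplit | hsmall
  · have hv2 : 0 < v / 2 := by positivity
    rw [← integral_add_adjacent_intervals (b := v / 2)
      (intervalIntegrable_exp_mul_mul_rpow θ _ hθinv hv2)
      (intervalIntegrable_exp_mul_mul_rpow θ _ hv2 hv), mul_add]
    refine add_le_add ?_ ?_
    · rw [← hθη, mul_div_assoc]
      exact mul_integral_exp_mul_mul_rpow_neg_le hη.le hθ hθinv hsplit
    · rw [← hvη]
      exact mul_integral_exp_mul_mul_rpow_neg_le hη.le hθ hv2 (by linarith)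
  · have hle : 1 / θ ≤ v := by rw [div_le_iff₀ hθ]; linarith
    calc θ * ∫ t in (1 / θ)..v, exp (θ * t) * t ^ (-η)
        ≤ (1 / θ) ^ (-η) * exp (θ * v) := mul_integral_exp_mul_mul_rpow_neg_le hη.le hθ hθinv hle
      _ ≤ (v / 2) ^ (-η) * exp (θ * v) := by
        refine mul_le_mul_of_nonneg_right ?_ (exp_pos _).le
        exact rpow_le_rpow_of_nonpos (by positivity) hsmall.le (neg_nonpos.mpr hη.le)
      _ = 2 ^ η * exp (θ * v) * v ^ (-η) := hvη
      _ ≤ _ := le_add_of_nonneg_left (by positivity)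
end

section
/- Let $Y$ be a nonnegative-tail random variable with $E[|Y|^{\eta}] < \infty$ for some $\eta > 0$, let $\theta > 0$ and $v \ge 1/\theta$. Then $e\, P(Y > 1/\theta) + \theta \int_{1/\theta}^{v} e^{\theta t} P(Y > t)\, dt \leq K_2\, e^{\theta v} v^{-\eta} E[|Y|^{\eta}]$, where $K_2 = \sup_{t \geq 1} \left( e t^{\eta} e^{-t} + t^{\eta} e^{-t/2} + 2^{\eta} \right) < \infty$. -/
open MeasureTheory ProbabilityTheory Filter
open scoped ENNReal

/-!
The tail `f t = P(Y > t)` is antitone and, by Markov, at most `t^(-η) E|Y|^η`. Split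
`[1/θ, v]` at `m = max (1/θ) (v/2)`: on `[1/θ, m]` bound `f` by `f (1/θ) ≤ θ^η E|Y|^η`, on
`[m, v]` by `f (v/2) ≤ 2^η v^(-η) E|Y|^η`, and integrate `θ e^(θt)` exactly; since
`e^(θm) ≤ e + e^(θv/2)` this gives `(e θ^η + θ^η e^(θv/2) + 2^η v^(-η) e^(θv)) E|Y|^η`, which is
`k₂ η (θv) e^(θv) v^(-η) E|Y|^η` with `θv ≥ 1`. The supremum is finite because
`t^η e^(-t/2) ≤ (2η)^η`.
-/

open Real

lemma rpow_mul_exp_neg_half_le {η t : ℝ} (hη : 0 < η) (ht : 0 ≤ t) :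
    t ^ η * exp (-t / 2) ≤ (2 * η) ^ η := by
  have hlin : t * exp (-(t / (2 * η))) ≤ 2 * η := by
    have key := mul_exp_neg_le_exp_neg_one (t / (2 * η))
    have he : exp (-1) ≤ 1 := exp_le_one_iff.mpr (by norm_num)
    calc t * exp (-(t / (2 * η))) = 2 * η * (t / (2 * η) * exp (-(t / (2 * η)))) := by
          field_simp
      _ ≤ 2 * η * 1 := by gcongr; exact key.trans he
      _ = 2 * η := mul_one _
  calc t ^ η * exp (-t / 2) = (t * exp (-(t / (2 * η)))) ^ η := by
        rw [mul_rpow ht (exp_pos _).le, ← exp_mul]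
        congr 2
        field_simp
    _ ≤ (2 * η) ^ η := by gcongr

/-- `K₂ = sup_{t ≥ 1} k₂ η t`. -/
noncomputable def k₂ (η t : ℝ) : ℝ := exp 1 * t ^ η * exp (-t) + t ^ η * exp (-t / 2) + 2 ^ η

lemma bddAbove_k₂ {η : ℝ} (hη : 0 < η) : BddAbove {y | ∃ t : ℝ, 1 ≤ t ∧ y = k₂ η t} := by
  refine ⟨exp 1 * (2 * η) ^ η + (2 * η) ^ η + 2 ^ η, ?_⟩
  rintro _ ⟨t, ht, rfl⟩
  have ht0 : 0 ≤ t := zero_le_one.trans ht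
  have hhalf := rpow_mul_exp_neg_half_le hη ht0
  have hexp : t ^ η * exp (-t) ≤ t ^ η * exp (-t / 2) := by gcongr; linarith
  have := mul_le_mul_of_nonneg_left (hexp.trans hhalf) (exp_pos 1).le
  simp only [k₂]
  linarith [mul_assoc (exp 1) (t ^ η) (exp (-t))]

lemma k₂_mul_exp_mul_rpow_neg (η : ℝ) {θ v : ℝ} (hθ : 0 ≤ θ) (hv : 0 < v) :
    k₂ η (θ * v) * exp (θ * v) * v ^ (-η)
      = exp 1 * θ ^ η + θ ^ η * exp (θ * v / 2) + 2 ^ η * v ^ (-η) * exp (θ * v) := by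
  have hpow : v ^ η * v ^ (-η) = 1 := by rw [← rpow_add hv]; simp
  have hexp : exp (-(θ * v)) * exp (θ * v) = 1 := by rw [← exp_add]; simp
  have hhalf : exp (-(θ * v) / 2) * exp (θ * v) = exp (θ * v / 2) := by
    rw [← exp_add]; ring_nf
  simp only [k₂, mul_rpow hθ hv.le]
  linear_combination (exp 1 * θ ^ η * exp (-(θ * v)) * exp (θ * v)) * hpow
    + (exp 1 * θ ^ η) * hexp + (θ ^ η * exp (-(θ * v) / 2) * exp (θ * v)) * hpow
    + θ ^ η * hhalf

section Tail

variable {Ω : Type*} [MeasurableSpace Ω] (P : Measure Ω) [IsFiniteMeasure P] (Y : Ω → ℝ)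

lemma antitone_toReal_measure_lt : Antitone fun t => (P {ω | t < Y ω}).toReal :=
  fun _ _ hst => ENNReal.toReal_mono (measure_ne_top _ _)
    (measure_mono fun _ hω => lt_of_le_of_lt hst hω)

lemma toReal_measure_lt_le_rpow_neg_mul_integral {η : ℝ} (hη : 0 ≤ η)
    (hmom : Integrable (fun ω => |Y ω| ^ η) P) {t : ℝ} (ht : 0 < t) :
    (P {ω | t < Y ω}).toReal ≤ t ^ (-η) * ∫ ω, |Y ω| ^ η ∂P := by
  have hmarkov : t ^ η * P.real {ω | t ^ η ≤ |Y ω| ^ η} ≤ ∫ ω, |Y ω| ^ η ∂P :=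
    mul_meas_ge_le_integral_of_nonneg (ae_of_all _ fun _ => rpow_nonneg (abs_nonneg _) _) hmom _
  have hsub : {ω | t < Y ω} ⊆ {ω | t ^ η ≤ |Y ω| ^ η} := fun ω hω =>
    rpow_le_rpow ht.le ((le_of_lt hω).trans (le_abs_self _)) hη
  rw [rpow_neg ht.le, ← div_eq_inv_mul, le_div_iff₀' (rpow_pos_of_pos ht η)]
  exact (mul_le_mul_of_nonneg_left (measureReal_mono hsub) (rpow_nonneg ht.le η)).trans hmarkov

end Tail

lemma mul_integral_exp_mul_le_of_antitone {f : ℝ → ℝ} (hf : Antitone f) {θ b c : ℝ}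
    (hθ : 0 < θ) (hbc : b ≤ c) :
    θ * ∫ t in b..c, exp (θ * t) * f t ≤ (exp (θ * c) - exp (θ * b)) * f b := by
  have hcont : Continuous fun t => exp (θ * t) := by fun_prop
  have hmono : ∫ t in b..c, exp (θ * t) * f t ≤ ∫ t in b..c, exp (θ * t) * f b :=
    intervalIntegral.integral_mono_on hbc
      (hf.intervalIntegrable.continuousOn_mul hcont.continuousOn)
      ((hcont.mul continuous_const).intervalIntegrable _ _)
      fun t ht => mul_le_mul_of_nonneg_left (hf ht.1) (exp_pos _).le
  calc θ * ∫ t in b..c, exp (θ * t) * f t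
      ≤ θ * ∫ t in b..c, exp (θ * t) * f b := by gcongr
    _ = (exp (θ * c) - exp (θ * b)) * f b := by
      rw [intervalIntegral.integral_mul_const, ← mul_assoc,
        intervalIntegral.mul_integral_comp_mul_left, integral_exp]

lemma mul_integral_exp_mul_le_of_antitone_of_nonneg {f : ℝ → ℝ} (hf : Antitone f)
    (hf0 : ∀ t, 0 ≤ f t) {θ a v : ℝ} (hθ : 0 < θ) (hav : a ≤ v) (hv : 0 ≤ v) :
    θ * ∫ t in a..v, exp (θ * t) * f t ≤ exp (θ * v / 2) * f a + exp (θ * v) * f (v / 2) := by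
  set m := max a (v / 2)
  have ham : a ≤ m := le_max_left _ _
  have hmv : m ≤ v := max_le hav (by linarith)
  have hint : ∀ b c, IntervalIntegrable (fun t => exp (θ * t) * f t) volume b c := fun _ _ =>
    hf.intervalIntegrable.continuousOn_mul (by fun_prop)
  have hexp_m : exp (θ * m) ≤ exp (θ * a) + exp (θ * v / 2) := by
    rw [mul_max_of_nonneg _ _ hθ.le, Monotone.map_max exp_monotone, ← mul_div_assoc]
    exact max_le (le_add_of_nonneg_right (exp_pos _).le) (le_add_of_nonneg_left (exp_pos _).le)
  have hfm : f m ≤ f (v / 2) := hf (le_max_right _ _)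
  rw [← intervalIntegral.integral_add_adjacent_intervals (hint a m) (hint m v), mul_add]
  have hlow := mul_integral_exp_mul_le_of_antitone hf hθ ham
  have hhigh := mul_integral_exp_mul_le_of_antitone hf hθ hmv
  have h1 : (exp (θ * m) - exp (θ * a)) * f a ≤ exp (θ * v / 2) * f a := by
    gcongr
    · exact hf0 a
    · linarith
  have h2 : (exp (θ * v) - exp (θ * m)) * f m ≤ exp (θ * v) * f (v / 2) := by
    exact mul_le_mul (by linarith [exp_pos (θ * m)]) hfm (hf0 m) (exp_pos _).le
  linarith

theorem stmt5_general {Ω : Type*} [MeasurableSpace Ω] (P : Measure Ω) [IsProbabilityMeasure P]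
    (Y : Ω → ℝ) (η : ℝ) (hη : 0 < η)
    (hmom : Integrable (fun ω => |Y ω| ^ η) P)
    (θ v : ℝ) (hθ : 0 < θ) (hv : 1 / θ ≤ v)
    (K₂ : ℝ)
    (hK₂ : K₂ = sSup {y : ℝ | ∃ t : ℝ, 1 ≤ t ∧
      y = Real.exp 1 * t ^ η * Real.exp (-t) + t ^ η * Real.exp (-t / 2) + (2 : ℝ) ^ η}) :
    BddAbove {y : ℝ | ∃ t : ℝ, 1 ≤ t ∧
        y = Real.exp 1 * t ^ η * Real.exp (-t) + t ^ η * Real.exp (-t / 2) + (2 : ℝ) ^ η} ∧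
    Real.exp 1 * (P {ω | 1 / θ < Y ω}).toReal
        + θ * ∫ t in (1 / θ)..v, Real.exp (θ * t) * (P {ω | t < Y ω}).toReal
      ≤ K₂ * Real.exp (θ * v) * v ^ (-η) * ∫ ω, |Y ω| ^ η ∂P := by
  have hbdd := bddAbove_k₂ hη
  refine ⟨hbdd, ?_⟩
  set M := ∫ ω, |Y ω| ^ η ∂P
  have hv0 : 0 < v := (one_div_pos.mpr hθ).trans_le hv
  have hK : k₂ η (θ * v) ≤ K₂ :=
    hK₂ ▸ le_csSup hbdd ⟨θ * v, by rwa [div_le_iff₀' hθ] at hv, rfl⟩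
  have htail_a : (P {ω | 1 / θ < Y ω}).toReal ≤ θ ^ η * M := by
    have := toReal_measure_lt_le_rpow_neg_mul_integral P Y hη.le hmom (one_div_pos.mpr hθ)
    rwa [one_div θ, inv_rpow hθ.le, rpow_neg hθ.le, inv_inv, ← one_div] at this
  have htail_half : (P {ω | v / 2 < Y ω}).toReal ≤ 2 ^ η * v ^ (-η) * M := by
    have := toReal_measure_lt_le_rpow_neg_mul_integral P Y hη.le hmom (half_pos hv0)
    rwa [div_rpow hv0.le zero_le_two, rpow_neg zero_le_two, div_inv_eq_mul, mul_comm (v ^ (-η))]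
      at this
  have hM : 0 ≤ M := integral_nonneg fun _ => rpow_nonneg (abs_nonneg _) _
  calc exp 1 * (P {ω | 1 / θ < Y ω}).toReal
        + θ * ∫ t in (1 / θ)..v, exp (θ * t) * (P {ω | t < Y ω}).toReal
      ≤ exp 1 * (P {ω | 1 / θ < Y ω}).toReal + (exp (θ * v / 2) * (P {ω | 1 / θ < Y ω}).toReal
          + exp (θ * v) * (P {ω | v / 2 < Y ω}).toReal) := by
        gcongr
        exact mul_integral_exp_mul_le_of_antitone_of_nonneg (antitone_toReal_measure_lt P Y)
          (fun _ => ENNReal.toReal_nonneg) hθ hv hv0.le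
    _ ≤ exp 1 * (θ ^ η * M) + (exp (θ * v / 2) * (θ ^ η * M)
          + exp (θ * v) * (2 ^ η * v ^ (-η) * M)) := by gcongr
    _ = k₂ η (θ * v) * exp (θ * v) * v ^ (-η) * M := by
        rw [k₂_mul_exp_mul_rpow_neg η hθ.le hv0]; ring
    _ ≤ K₂ * exp (θ * v) * v ^ (-η) * M := by gcongr

/-- Tail integral bound:
`e P(Y > 1/θ) + θ ∫_{1/θ}^v e^{θt} P(Y > t) dt ≤ K₂ e^{θv} v^{-η} E[|Y|^η]`,
where `K₂ = sup_{t ≥ 1} (e t^η e^{-t} + t^η e^{-t/2} + 2^η)`, a finite constant. -/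
theorem stmt5 {Ω : Type*} [MeasurableSpace Ω] (P : Measure Ω) [IsProbabilityMeasure P]
    (Y : Ω → ℝ) (hY : Measurable Y) (η : ℝ) (hη : 0 < η)
    (hmom : Integrable (fun ω => |Y ω| ^ η) P)
    (θ v : ℝ) (hθ : 0 < θ) (hv : 1 / θ ≤ v)
    (K₂ : ℝ)
    (hK₂ : K₂ = sSup {y : ℝ | ∃ t : ℝ, 1 ≤ t ∧
      y = Real.exp 1 * t ^ η * Real.exp (-t) + t ^ η * Real.exp (-t / 2) + (2 : ℝ) ^ η}) :
    BddAbove {y : ℝ | ∃ t : ℝ, 1 ≤ t ∧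
        y = Real.exp 1 * t ^ η * Real.exp (-t) + t ^ η * Real.exp (-t / 2) + (2 : ℝ) ^ η} ∧
    Real.exp 1 * (P {ω | 1 / θ < Y ω}).toReal
        + θ * ∫ t in (1 / θ)..v, Real.exp (θ * t) * (P {ω | t < Y ω}).toReal
      ≤ K₂ * Real.exp (θ * v) * v ^ (-η) * ∫ ω, |Y ω| ^ η ∂P :=
  stmt5_general P Y η hη hmom θ v hθ hv K₂ hK₂
end

section
/- Suppose $\overline{F} \in IR$ with Matuszewska indices $0 < \alpha_f \le \beta_f < \infty$, and let $C \ge 0$ be a random variable with $E[C^{\alpha_f - \epsilon}] < \infty$ and $E[C^{\beta_f + \epsilon}] < \infty$ for some $0 < \epsilon < \alpha_f$. Then there is a constant $K$ and $x_0$ such that for all $x \ge x_0$, $E\left[\frac{\overline{F}(x/C)}{\overline{F}(x)}\right] \leq K\, E\left[C^{\alpha_f-\epsilon} \vee C^{\beta_f+\epsilon}\right]$, where $\overline{F}(x/C) := 0$ on $\{C = 0\}$. -/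
/-!
Write `f = -log F̄`. If `liminf_x (f(λx) - f(x)) / log λ → β` and `r < β`, some `λ > 1` satisfies
`F̄(λy) ≤ λ^{-r} F̄(y)` for all large `y`; iterating along the powers of `λ` gives the upper Potter
bound `F̄(μy) ≤ λ^r μ^{-r} F̄(y)` for `μ ≥ 1`. Symmetrically, the limsup index `α < s` gives the
lower Potter bound `λ^{-s} μ^{-s} F̄(y) ≤ F̄(μy)`, and since `F̄ ≤ 1` it persists, with the extra
factor `F̄(x₂)`, for every `y` such that `μy ≥ x₂`. Taking `μ = 1/c` when `c ≤ 1` and `μ = c`,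
`y = x/c` when `c > 1` bounds `F̄(x/c)/F̄(x)` by `K (c^{α-ε} ∨ c^{β+ε})` uniformly in `x ≥ x₀`;
integrating in `C` gives the claim.
-/

open MeasureTheory ProbabilityTheory Filter
open scoped ENNReal

/-- The right tail distribution of a real random variable. -/
noncomputable def rtail {Ω : Type*} [MeasurableSpace Ω] (P : Measure Ω) (X : Ω → ℝ)
    (x : ℝ) : ℝ := (P {ω | x < X ω}).toReal

/-- Intermediate regular variation: `lim_{δ↓0} limsup_{x→∞} F̄((1-δ)x)/F̄(x) = 1`. -/
def IsIR (F : ℝ → ℝ) : Prop :=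
  Tendsto (fun δ : ℝ => Filter.limsup (fun x : ℝ => F ((1 - δ) * x) / F x) atTop)
    (nhdsWithin 0 (Set.Ioi 0)) (nhds 1)

open Real Topology

section Tail

variable {Ω : Type*} [MeasurableSpace Ω] (P : Measure Ω) (X : Ω → ℝ)

theorem rtail_antitone [IsFiniteMeasure P] : Antitone (rtail P X) := fun _ _ hst =>
  ENNReal.toReal_mono (measure_ne_top P _) (measure_mono fun _ hω => hst.trans_lt hω)

theorem rtail_nonneg (x : ℝ) : 0 ≤ rtail P X x := ENNReal.toReal_nonneg

theorem rtail_le_one [IsProbabilityMeasure P] (x : ℝ) : rtail P X x ≤ 1 :=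
  ENNReal.toReal_le_of_le_ofReal zero_le_one (by simpa using prob_le_one)

end Tail

-- Without boundedness, `liminf` and `limsup` in `ℝ` take the junk value `0`.
theorem eventually_lt_of_lt_liminf_of_ne_zero {ι : Type*} {l : Filter ι} {u : ι → ℝ} {a : ℝ}
    (h : a < liminf u l) (hne : liminf u l ≠ 0) : ∀ᶠ x in l, a < u x :=
  eventually_lt_of_lt_liminf h (not_not.1 fun hu => hne (Real.liminf_of_not_isBoundedUnder hu))

theorem eventually_lt_of_limsup_lt_of_ne_zero {ι : Type*} {l : Filter ι} {u : ι → ℝ} {a : ℝ}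
    (h : limsup u l < a) (hne : limsup u l ≠ 0) : ∀ᶠ x in l, u x < a :=
  eventually_lt_of_limsup_lt h (not_not.1 fun hu => hne (Real.limsup_of_not_isBoundedUnder hu))

section Indices

variable {f : ℝ → ℝ}

theorem exists_eventually_lt_of_tendsto_liminf_div_log {β r : ℝ}
    (h : Tendsto (fun lam => liminf (fun x => f (lam * x) - f x) atTop / log lam) atTop (𝓝 β))
    (hr : 0 ≤ r) (hrβ : r < β) :
    ∃ lam, 1 < lam ∧ ∀ᶠ x in atTop, r * log lam < f (lam * x) - f x := by
  obtain ⟨lam, hlt, hlam⟩ :=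
    ((h.eventually (eventually_gt_nhds hrβ)).and (eventually_gt_atTop 1)).exists
  have hlog : 0 < log lam := log_pos hlam
  have hlt' := (lt_div_iff₀ hlog).1 hlt
  exact ⟨lam, hlam,
    eventually_lt_of_lt_liminf_of_ne_zero hlt' ((mul_nonneg hr hlog.le).trans_lt hlt').ne'⟩

theorem exists_eventually_lt_of_tendsto_limsup_div_log {α s : ℝ}
    (h : Tendsto (fun lam => limsup (fun x => f (lam * x) - f x) atTop / log lam) atTop (𝓝 α))
    (hα : 0 < α) (hαs : α < s) :
    ∃ lam, 1 < lam ∧ ∀ᶠ x in atTop, f (lam * x) - f x < s * log lam := by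
  obtain ⟨lam, ⟨hpos, hlt⟩, hlam⟩ := (((h.eventually (eventually_gt_nhds hα)).and
    (h.eventually (eventually_lt_nhds hαs))).and (eventually_gt_atTop 1)).exists
  have hlog : 0 < log lam := log_pos hlam
  exact ⟨lam, hlam, eventually_lt_of_limsup_lt_of_ne_zero ((div_lt_iff₀ hlog).1 hlt)
    ((div_pos_iff_of_pos_right hlog).1 hpos).ne'⟩

end Indices

section Potter

variable {G : ℝ → ℝ} {lam : ℝ}

theorem pos_of_eventually_lt_neg_log_sub (hG : Antitone G) (hG0 : ∀ x, 0 ≤ G x)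
    (hG1 : ∀ x, G x ≤ 1) (hlam : 1 ≤ lam)
    (h : ∀ᶠ x in atTop, 0 < -log (G (lam * x)) - -log (G x)) (z : ℝ) : 0 < G z := by
  obtain ⟨y, hy, hzy⟩ := (h.and (eventually_ge_atTop (max z 0))).exists
  have hne : G (lam * y) ≠ 0 := by
    intro h0
    rw [h0, log_zero] at hy
    linarith [log_nonpos (hG0 y) (hG1 y)]
  refine ((hG0 _).lt_of_ne' hne).trans_le (hG ?_)
  exact ((le_max_left _ _).trans hzy).trans
    (le_mul_of_one_le_left ((le_max_right _ _).trans hzy) hlam)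

theorem eventually_le_rpow_neg_mul_of_lt_neg_log_sub (hGpos : ∀ x, 0 < G x) (hlam : 0 < lam)
    {r : ℝ} (h : ∀ᶠ x in atTop, r * log lam < -log (G (lam * x)) - -log (G x)) :
    ∀ᶠ x in atTop, G (lam * x) ≤ lam ^ (-r) * G x := h.mono fun x hx => by
  rw [← log_le_log_iff (hGpos _) (mul_pos (rpow_pos_of_pos hlam _) (hGpos x)),
    log_mul (rpow_pos_of_pos hlam _).ne' (hGpos x).ne', log_rpow hlam]
  linarith

theorem eventually_rpow_neg_mul_le_of_neg_log_sub_lt (hGpos : ∀ x, 0 < G x) (hlam : 0 < lam)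
    {s : ℝ} (h : ∀ᶠ x in atTop, -log (G (lam * x)) - -log (G x) < s * log lam) :
    ∀ᶠ x in atTop, lam ^ (-s) * G x ≤ G (lam * x) := h.mono fun x hx => by
  rw [← log_le_log_iff (mul_pos (rpow_pos_of_pos hlam _) (hGpos x)) (hGpos _),
    log_mul (rpow_pos_of_pos hlam _).ne' (hGpos x).ne', log_rpow hlam]
  linarith

theorem eventually_forall_le_pow_mul {q : ℝ} (hq : 0 ≤ q) (hlam : 1 ≤ lam)
    (h : ∀ᶠ y in atTop, G (lam * y) ≤ q * G y) :
    ∀ᶠ y in atTop, ∀ n : ℕ, G (lam ^ n * y) ≤ q ^ n * G y := by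
  obtain ⟨x₁, hx₁⟩ := eventually_atTop.1 (h.and (eventually_ge_atTop 0))
  filter_upwards [eventually_ge_atTop x₁] with y hy n
  induction n with
  | zero => simp
  | succ n ih =>
    have hyn : x₁ ≤ lam ^ n * y :=
      hy.trans (le_mul_of_one_le_left (hx₁ y hy).2 (one_le_pow₀ hlam))
    calc G (lam ^ (n + 1) * y) = G (lam * (lam ^ n * y)) := by rw [pow_succ', mul_assoc]
      _ ≤ q * G (lam ^ n * y) := (hx₁ _ hyn).1
      _ ≤ q * (q ^ n * G y) := mul_le_mul_of_nonneg_left ih hq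
      _ = q ^ (n + 1) * G y := by ring

theorem eventually_forall_pow_mul_le {q : ℝ} (hq : 0 ≤ q) (hlam : 1 ≤ lam)
    (h : ∀ᶠ y in atTop, q * G y ≤ G (lam * y)) :
    ∀ᶠ y in atTop, ∀ n : ℕ, q ^ n * G y ≤ G (lam ^ n * y) :=
  (eventually_forall_le_pow_mul (G := -G) hq hlam (h.mono fun y hy => by simpa using hy)).mono
    fun y hy n => by simpa using hy n

theorem eventually_potter_upper (hG : Antitone G) (hG0 : ∀ x, 0 ≤ G x) (hlam : 1 < lam)
    {r : ℝ} (hr : 0 ≤ r) (h : ∀ᶠ y in atTop, G (lam * y) ≤ lam ^ (-r) * G y) :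
    ∀ᶠ y in atTop, ∀ μ ≥ 1, G (μ * y) ≤ lam ^ r * μ ^ (-r) * G y := by
  have hl : 0 < lam := zero_lt_one.trans hlam
  filter_upwards [eventually_forall_le_pow_mul (by positivity) hlam.le h,
    eventually_ge_atTop 0] with y hchain hy μ hμ
  obtain ⟨n, hn, hn'⟩ := exists_nat_pow_near hμ hlam
  have hpow : (lam ^ (-r)) ^ n ≤ lam ^ r * μ ^ (-r) :=
    calc (lam ^ (-r)) ^ n = lam ^ r * (lam ^ (n + 1)) ^ (-r) := by
          rw [rpow_pow_comm hl.le, pow_succ, mul_rpow (by positivity) hl.le, mul_left_comm,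
            ← rpow_add hl, add_neg_cancel, rpow_zero, mul_one]
      _ ≤ lam ^ r * μ ^ (-r) := mul_le_mul_of_nonneg_left
          (rpow_le_rpow_of_nonpos (zero_lt_one.trans_le hμ) hn'.le (neg_nonpos.2 hr))
          (by positivity)
  calc G (μ * y) ≤ G (lam ^ n * y) := hG (mul_le_mul_of_nonneg_right hn hy)
    _ ≤ (lam ^ (-r)) ^ n * G y := hchain n
    _ ≤ lam ^ r * μ ^ (-r) * G y := mul_le_mul_of_nonneg_right hpow (hG0 y)

theorem eventually_potter_lower (hG : Antitone G) (hG0 : ∀ x, 0 ≤ G x) (hlam : 1 < lam)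
    {s : ℝ} (hs : 0 ≤ s) (h : ∀ᶠ y in atTop, lam ^ (-s) * G y ≤ G (lam * y)) :
    ∀ᶠ y in atTop, ∀ μ ≥ 1, lam ^ (-s) * μ ^ (-s) * G y ≤ G (μ * y) := by
  have hl : 0 < lam := zero_lt_one.trans hlam
  filter_upwards [eventually_forall_pow_mul_le (by positivity) hlam.le h,
    eventually_ge_atTop 0] with y hchain hy μ hμ
  obtain ⟨n, hn, hn'⟩ := exists_nat_pow_near hμ hlam
  have hpow : lam ^ (-s) * μ ^ (-s) ≤ (lam ^ (-s)) ^ (n + 1) :=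
    calc lam ^ (-s) * μ ^ (-s) ≤ lam ^ (-s) * (lam ^ n) ^ (-s) := mul_le_mul_of_nonneg_left
          (rpow_le_rpow_of_nonpos (pow_pos hl n) hn (neg_nonpos.2 hs)) (by positivity)
      _ = (lam ^ (-s)) ^ (n + 1) := by
          rw [rpow_pow_comm hl.le, pow_succ', mul_rpow hl.le (by positivity)]
  calc lam ^ (-s) * μ ^ (-s) * G y ≤ (lam ^ (-s)) ^ (n + 1) * G y :=
        mul_le_mul_of_nonneg_right hpow (hG0 y)
    _ ≤ G (lam ^ (n + 1) * y) := hchain (n + 1)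
    _ ≤ G (μ * y) := hG (mul_le_mul_of_nonneg_right hn'.le hy)

theorem potter_lower_of_le_mul (hG0 : ∀ x, 0 ≤ G x) (hG1 : ∀ x, G x ≤ 1) {k s x₂ : ℝ}
    (hk : 0 ≤ k) (hs : 0 ≤ s) (hx₂ : 0 < x₂)
    (h : ∀ y ≥ x₂, ∀ μ ≥ 1, k * μ ^ (-s) * G y ≤ G (μ * y)) {y μ : ℝ} (hμ : 1 ≤ μ)
    (hμy : x₂ ≤ μ * y) : k * G x₂ * μ ^ (-s) * G y ≤ G (μ * y) := by
  have hμs : 0 ≤ μ ^ (-s) := rpow_nonneg (zero_le_one.trans hμ) _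
  have hkG : 0 ≤ k * G x₂ := mul_nonneg hk (hG0 x₂)
  rcases le_or_gt x₂ y with hxy | hxy
  · calc k * G x₂ * μ ^ (-s) * G y ≤ k * μ ^ (-s) * G y :=
          mul_le_mul_of_nonneg_right (mul_le_mul_of_nonneg_right
            (mul_le_of_le_one_right hk (hG1 x₂)) hμs) (hG0 y)
      _ ≤ G (μ * y) := h y hxy μ hμ
  · set ν := μ * y / x₂
    have hν : 1 ≤ ν := (one_le_div hx₂).2 hμy
    have hνμ : ν ≤ μ := div_le_of_le_mul₀ hx₂.le (by positivity)
      (mul_le_mul_of_nonneg_left hxy.le (zero_le_one.trans hμ))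
    have hνs : μ ^ (-s) ≤ ν ^ (-s) :=
      rpow_le_rpow_of_nonpos (zero_lt_one.trans_le hν) hνμ (neg_nonpos.2 hs)
    calc k * G x₂ * μ ^ (-s) * G y ≤ k * G x₂ * ν ^ (-s) * 1 :=
          mul_le_mul (mul_le_mul_of_nonneg_left hνs hkG) (hG1 y) (hG0 y)
            (mul_nonneg hkG (rpow_nonneg (zero_le_one.trans hν) _))
      _ = k * ν ^ (-s) * G x₂ := by ring
      _ ≤ G (ν * x₂) := h x₂ le_rfl ν hν
      _ = G (μ * y) := by rw [div_mul_cancel₀ _ hx₂.ne']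

theorem le_max_mul_max_rpow_mul_of_potter (hG0 : ∀ x, 0 ≤ G x) {A B r s x₁ x₂ : ℝ}
    (hB : 0 < B) (hup : ∀ y ≥ x₁, ∀ μ ≥ 1, G (μ * y) ≤ A * μ ^ (-r) * G y)
    (hlow : ∀ y, ∀ μ ≥ 1, x₂ ≤ μ * y → B * μ ^ (-s) * G y ≤ G (μ * y))
    {x c : ℝ} (hx₁x : x₁ ≤ x) (hx₂x : x₂ ≤ x) (hc : 0 < c) :
    G (x / c) ≤ max A B⁻¹ * max (c ^ r) (c ^ s) * G x := by
  have hK : 0 ≤ max A B⁻¹ := (inv_pos.2 hB).le.trans (le_max_right _ _)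
  rcases le_or_gt c 1 with hc1 | hc1
  · calc G (x / c) = G (c⁻¹ * x) := by rw [div_eq_inv_mul]
      _ ≤ A * c⁻¹ ^ (-r) * G x := hup x hx₁x c⁻¹ ((one_le_inv₀ hc).2 hc1)
      _ = A * c ^ r * G x := by rw [inv_rpow hc.le, rpow_neg hc.le, inv_inv]
      _ ≤ max A B⁻¹ * max (c ^ r) (c ^ s) * G x := mul_le_mul_of_nonneg_right
          (mul_le_mul (le_max_left _ _) (le_max_left _ _) (by positivity) hK) (hG0 x)
  · have hlow' := hlow (x / c) c hc1.le
      (by rwa [mul_div_cancel₀ _ hc.ne'])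
    rw [mul_div_cancel₀ _ hc.ne'] at hlow'
    calc G (x / c) = B⁻¹ * c ^ s * (B * c ^ (-s) * G (x / c)) := by
          rw [rpow_neg hc.le]; field_simp
      _ ≤ B⁻¹ * c ^ s * G x := mul_le_mul_of_nonneg_left hlow' (by positivity)
      _ ≤ max A B⁻¹ * max (c ^ r) (c ^ s) * G x := mul_le_mul_of_nonneg_right
          (mul_le_mul (le_max_right _ _) (le_max_right _ _) (by positivity) hK) (hG0 x)

end Potter

theorem lintegral_ite_div_le {Ω : Type*} [MeasurableSpace Ω] (P : Measure Ω) {C : Ω → ℝ}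
    (hC : ∀ ω, 0 ≤ C ω) {G φ : ℝ → ℝ} {K x : ℝ} (hK : 0 ≤ K) (hGx : 0 < G x)
    (h : ∀ c > 0, G (x / c) ≤ K * φ c * G x) :
    ∫⁻ ω, (if C ω = 0 then 0 else ENNReal.ofReal (G (x / C ω) / G x)) ∂P ≤
      ENNReal.ofReal K * ∫⁻ ω, ENNReal.ofReal (φ (C ω)) ∂P := by
  rw [← lintegral_const_mul' _ _ ENNReal.ofReal_ne_top]
  refine lintegral_mono fun ω => ?_
  split_ifs with h0
  · exact zero_le
  · rw [← ENNReal.ofReal_mul hK]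
    exact ENNReal.ofReal_le_ofReal ((div_le_iff₀ hGx).2 (h _ ((hC ω).lt_of_ne' h0)))

theorem stmt13_general {Ω : Type*} [MeasurableSpace Ω] (P : Measure Ω) [IsProbabilityMeasure P]
    (X : Ω → ℝ) (C : Ω → ℝ)
    (hCnn : ∀ ω, 0 ≤ C ω)
    (α β ε : ℝ) (h0α : 0 < α) (hαβ : α ≤ β) (hε : 0 < ε) (hεα : ε < α)
    (hα : Tendsto (fun lam : ℝ =>
        (Filter.limsup (fun x : ℝ =>
          (-Real.log (rtail P X (lam * x))) - (-Real.log (rtail P X x))) atTop)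
          / Real.log lam) atTop (nhds α))
    (hβ : Tendsto (fun lam : ℝ =>
        (Filter.liminf (fun x : ℝ =>
          (-Real.log (rtail P X (lam * x))) - (-Real.log (rtail P X x))) atTop)
          / Real.log lam) atTop (nhds β)) :
    ∃ K x₀ : ℝ, 0 < K ∧ 0 < x₀ ∧ ∀ x ≥ x₀,
      ∫⁻ ω, (if C ω = 0 then 0
          else ENNReal.ofReal (rtail P X (x / C ω) / rtail P X x)) ∂P
        ≤ ENNReal.ofReal K *
            ∫⁻ ω, ENNReal.ofReal (max (C ω ^ (α - ε)) (C ω ^ (β + ε))) ∂P := by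
  set G := rtail P X
  have hG : Antitone G := rtail_antitone P X
  have hG0 : ∀ x, 0 ≤ G x := rtail_nonneg P X
  have hG1 : ∀ x, G x ≤ 1 := rtail_le_one P X
  obtain ⟨lam₀, hlam₀, hinc₀⟩ := exists_eventually_lt_of_tendsto_liminf_div_log
    (f := fun z => -log (G z)) (r := α - ε) hβ (by linarith) (by linarith)
  obtain ⟨lam₁, hlam₁, hinc₁⟩ := exists_eventually_lt_of_tendsto_limsup_div_log
    (f := fun z => -log (G z)) (s := β + ε) hα h0α (by linarith)
  have hGpos : ∀ z, 0 < G z := pos_of_eventually_lt_neg_log_sub hG hG0 hG1 hlam₀.le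
    (hinc₀.mono fun x hx => (mul_nonneg (by linarith) (log_pos hlam₀).le).trans_lt hx)
  obtain ⟨x₁, hup⟩ := eventually_atTop.1 (eventually_potter_upper hG hG0 hlam₀ (by linarith)
    (eventually_le_rpow_neg_mul_of_lt_neg_log_sub hGpos (by linarith) hinc₀))
  obtain ⟨x₂, hlow⟩ := eventually_atTop.1 ((eventually_potter_lower hG hG0 hlam₁ (by linarith)
    (eventually_rpow_neg_mul_le_of_neg_log_sub_lt hGpos (by linarith) hinc₁)).and
      (eventually_gt_atTop 0))
  have hx₂ : 0 < x₂ := (hlow x₂ le_rfl).2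
  have hB : 0 < lam₁ ^ (-(β + ε)) * G x₂ := mul_pos (rpow_pos_of_pos (by linarith) _) (hGpos x₂)
  refine ⟨max (lam₀ ^ (α - ε)) (lam₁ ^ (-(β + ε)) * G x₂)⁻¹, max x₁ x₂,
    lt_max_of_lt_right (inv_pos.2 hB), lt_max_of_lt_right hx₂, fun x hx => ?_⟩
  refine lintegral_ite_div_le P hCnn ((inv_pos.2 hB).le.trans (le_max_right _ _)) (hGpos x)
    fun c hc => le_max_mul_max_rpow_mul_of_potter hG0 hB hup (fun y μ hμ hμy => ?_)
      (le_of_max_le_left hx) (le_of_max_le_right hx) hc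
  exact potter_lower_of_le_mul hG0 hG1 (rpow_pos_of_pos (by linarith) _).le (by linarith) hx₂
    (fun y hy => (hlow y hy).1) hμ hμy

/-- For `F̄ ∈ IR` with Matuszewska indices `0 < α_f ≤ β_f < ∞` and a nonnegative random
variable `C` with `E[C^{α_f-ε}], E[C^{β_f+ε}] < ∞`: there are `K` and `x₀` with
`E[F̄(x/C)/F̄(x)] ≤ K E[C^{α_f-ε} ∨ C^{β_f+ε}]` for all `x ≥ x₀`
(convention `F̄(x/C) = 0` on `{C = 0}`). -/
theorem stmt13 {Ω : Type*} [MeasurableSpace Ω] (P : Measure Ω) [IsProbabilityMeasure P]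
    (X : Ω → ℝ) (hX : Measurable X) (C : Ω → ℝ) (hCmeas : Measurable C)
    (hCnn : ∀ ω, 0 ≤ C ω)
    (α β ε : ℝ) (h0α : 0 < α) (hαβ : α ≤ β) (hε : 0 < ε) (hεα : ε < α)
    (hIR : IsIR (rtail P X))
    (hα : Tendsto (fun lam : ℝ =>
        (Filter.limsup (fun x : ℝ =>
          (-Real.log (rtail P X (lam * x))) - (-Real.log (rtail P X x))) atTop)
          / Real.log lam) atTop (nhds α))
    (hβ : Tendsto (fun lam : ℝ =>
        (Filter.liminf (fun x : ℝ =>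
          (-Real.log (rtail P X (lam * x))) - (-Real.log (rtail P X x))) atTop)
          / Real.log lam) atTop (nhds β))
    (hm1 : ∫⁻ ω, ENNReal.ofReal (C ω ^ (α - ε)) ∂P ≠ ∞)
    (hm2 : ∫⁻ ω, ENNReal.ofReal (C ω ^ (β + ε)) ∂P ≠ ∞) :
    ∃ K x₀ : ℝ, 0 < K ∧ 0 < x₀ ∧ ∀ x ≥ x₀,
      ∫⁻ ω, (if C ω = 0 then 0
          else ENNReal.ofReal (rtail P X (x / C ω) / rtail P X x)) ∂P
        ≤ ENNReal.ofReal K *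
            ∫⁻ ω, ENNReal.ofReal (max (C ω ^ (α - ε)) (C ω ^ (β + ε))) ∂P :=
  stmt13_general P X C hCnn α β ε h0α hαβ hε hεα hα hβ
end
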